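/- For any two Borel probability measures ν and ν̃ on a nonempty standard Borel space Z there exists a coupling W of ν and ν̃ such that W({(z,z') ∈ Z × Z | z = z'}) ≥ (ν ⊓ ν̃)(Z), where ν ⊓ ν̃ denotes the infimum of ν and ν̃ in the lattice of measures on Z. -/

import Mathlib

/-!
Let `ρ = ν ⊓ ν'`. Put the common part `ρ` on the diagonal, and couple the residuals
`ν - ρ` and `ν' - ρ`, which have the same mass `1 - ρ univ`, independently, renormalizing
their product so that its marginals are the residuals again. The diagonal part alone already gives
`W {p | p.1 = p.2} ≥ ρ univ`.
-/

open MeasureTheory Set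

/-- `W` is a coupling of `μ` and `ν`: a probability measure on the product whose
marginals are `μ` and `ν`. -/
def IsCoupling {X₁ X₂ : Type*} [MeasurableSpace X₁] [MeasurableSpace X₂]
    (W : Measure (X₁ × X₂)) (μ : Measure X₁) (ν : Measure X₂) : Prop :=
  IsProbabilityMeasure W ∧ W.map Prod.fst = μ ∧ W.map Prod.snd = ν

namespace MeasureTheory.Measure

variable {X Y : Type*} [MeasurableSpace X] [MeasurableSpace Y]

theorem inv_measure_univ_mul_smul_self (μ : Measure X) [IsFiniteMeasure μ] :
    ((μ univ)⁻¹ * μ univ) • μ = μ := by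
  rcases eq_or_ne μ 0 with rfl | hμ
  · simp
  · rw [ENNReal.inv_mul_cancel (measure_univ_ne_zero.mpr hμ) (measure_ne_top μ univ), one_smul]

noncomputable def normalizedProd (μ : Measure X) (ν : Measure Y) : Measure (X × Y) :=
  (μ univ)⁻¹ • μ.prod ν

section normalizedProd

variable {μ : Measure X} {ν : Measure Y}

theorem map_fst_normalizedProd [IsFiniteMeasure μ] [SFinite ν] (h : μ univ = ν univ) :
    (normalizedProd μ ν).map Prod.fst = μ := by
  rw [normalizedProd, Measure.map_smul, map_fst_prod, smul_smul, ← h,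
    inv_measure_univ_mul_smul_self]

theorem map_snd_normalizedProd [SFinite μ] [IsFiniteMeasure ν] (h : μ univ = ν univ) :
    (normalizedProd μ ν).map Prod.snd = ν := by
  rw [normalizedProd, Measure.map_smul, map_snd_prod, smul_smul, h,
    inv_measure_univ_mul_smul_self]

end normalizedProd

theorem map_fst_map_diag (ρ : Measure X) : (ρ.map fun x => (x, x)).map Prod.fst = ρ := by
  rw [map_map measurable_fst (by fun_prop)]
  exact map_id

theorem map_snd_map_diag (ρ : Measure X) : (ρ.map fun x => (x, x)).map Prod.snd = ρ := by
  rw [map_map measurable_snd (by fun_prop)]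
  exact map_id

/-- The coupling of `μ` and `ν` that keeps a common part `ρ` on the diagonal. -/
noncomputable def diagCoupling (ρ μ ν : Measure X) : Measure (X × X) :=
  ρ.map (fun x => (x, x)) + normalizedProd (μ - ρ) (ν - ρ)

theorem measure_univ_sub_eq_of_le {ρ μ ν : Measure X} [IsFiniteMeasure ρ] (hμ : ρ ≤ μ)
    (hν : ρ ≤ ν) (h : μ univ = ν univ) : (μ - ρ) univ = (ν - ρ) univ := by
  rw [sub_apply .univ hμ, sub_apply .univ hν, h]

section diagCoupling

variable {ρ μ ν : Measure X} [IsFiniteMeasure μ] [IsFiniteMeasure ν]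

theorem map_fst_diagCoupling (hμ : ρ ≤ μ) (hν : ρ ≤ ν) (h : μ univ = ν univ) :
    (diagCoupling ρ μ ν).map Prod.fst = μ := by
  have := isFiniteMeasure_of_le μ hμ
  have hres := measure_univ_sub_eq_of_le hμ hν h
  rw [diagCoupling, Measure.map_add _ _ measurable_fst,
    map_fst_map_diag, map_fst_normalizedProd hres]
  exact (add_comm _ _).trans (sub_add_cancel_of_le hμ)

theorem map_snd_diagCoupling (hμ : ρ ≤ μ) (hν : ρ ≤ ν) (h : μ univ = ν univ) :
    (diagCoupling ρ μ ν).map Prod.snd = ν := by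
  have := isFiniteMeasure_of_le μ hμ
  have hres := measure_univ_sub_eq_of_le hμ hν h
  rw [diagCoupling, Measure.map_add _ _ measurable_snd,
    map_snd_map_diag, map_snd_normalizedProd hres]
  exact (add_comm _ _).trans (sub_add_cancel_of_le hν)

end diagCoupling

theorem measure_univ_le_diagCoupling_diagonal (ρ μ ν : Measure X) :
    ρ univ ≤ diagCoupling ρ μ ν {p : X × X | p.1 = p.2} :=
  calc ρ univ = ρ ((fun x => (x, x)) ⁻¹' {p : X × X | p.1 = p.2}) := by simp
    _ ≤ ρ.map (fun x => (x, x)) {p : X × X | p.1 = p.2} :=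
      le_map_apply (by fun_prop) _
    _ ≤ diagCoupling ρ μ ν {p : X × X | p.1 = p.2} := le_add_right le_rfl

end MeasureTheory.Measure

theorem isCoupling_of_map_fst_of_map_snd {X₁ X₂ : Type*} [MeasurableSpace X₁]
    [MeasurableSpace X₂] {W : Measure (X₁ × X₂)} {μ : Measure X₁} {ν : Measure X₂}
    [IsProbabilityMeasure μ] (hfst : W.map Prod.fst = μ) (hsnd : W.map Prod.snd = ν) :
    IsCoupling W μ ν := by
  refine ⟨⟨?_⟩, hfst, hsnd⟩
  rw [← measure_univ (μ := μ), ← hfst, Measure.map_apply measurable_fst MeasurableSet.univ,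
    preimage_univ]

theorem exists_maximal_coupling_general
    {Z : Type*} [MeasurableSpace Z]
    (ν ν' : Measure Z) [IsProbabilityMeasure ν] [IsProbabilityMeasure ν'] :
    ∃ W : Measure (Z × Z), IsCoupling W ν ν' ∧
      (ν ⊓ ν') Set.univ ≤ W {p : Z × Z | p.1 = p.2} := by
  have hν : ν ⊓ ν' ≤ ν := inf_le_left
  have hν' : ν ⊓ ν' ≤ ν' := inf_le_right
  have hmass : ν univ = ν' univ := by simp
  refine ⟨Measure.diagCoupling (ν ⊓ ν') ν ν', ?_,
    Measure.measure_univ_le_diagCoupling_diagonal _ _ _⟩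
  exact isCoupling_of_map_fst_of_map_snd (Measure.map_fst_diagCoupling hν hν' hmass)
    (Measure.map_snd_diagCoupling hν hν' hmass)

/-- Maximal (γ-)coupling: any two Borel probability measures on a nonempty standard
Borel space admit a coupling placing at least the common mass `(ν ⊓ ν̃)(Z)` on the
diagonal. -/
theorem exists_maximal_coupling
    {Z : Type*} [MeasurableSpace Z] [StandardBorelSpace Z] [Nonempty Z]
    (ν ν' : Measure Z) [IsProbabilityMeasure ν] [IsProbabilityMeasure ν'] :
    ∃ W : Measure (Z × Z), IsCoupling W ν ν' ∧
      (ν ⊓ ν') Set.univ ≤ W {p : Z × Z | p.1 = p.2} :=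
  exists_maximal_coupling_general ν ν'
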